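/- For |q|<1 and complex x, t with no vanishing denominators: (-x;q)_∞ · Σ_{k≥0} q^{k(k-1)} y^k / ((q^2;q^2)_k (-x;q)_{2k}) = (-y;q^2)_∞ · Σ_{k≥0} q^{k(k-1)/2} x^k / ((q;q)_k (-y;q^2)_k). -/

import Mathlib

noncomputable def qp (a q : ℂ) (k : ℕ) : ℂ := ∏ j ∈ Finset.range k, (1 - a * q ^ j)
noncomputable def qpi (a q : ℂ) : ℂ := ∏' j : ℕ, (1 - a * q ^ j)

/-!
Both sides equal the absolutely convergent double series
`∑_{k,n} q^{k(k-1)} y^k / (q²;q²)_k · q^{n(n-1)/2} x^n / (q;q)_n · q^{2kn}`.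
Summing over `n` first, Euler's identity `(-w;q)_∞ = ∑_n q^{n(n-1)/2} wⁿ / (q;q)_n` with
`w = x q^{2k}` turns the inner sum into `(-x q^{2k};q)_∞ = (-x;q)_∞ / (-x;q)_{2k}`; summing over
`k` first, Euler's identity in base `q²` with `w = y q^{2n}` gives `(-y;q²)_∞ / (-y;q²)_n`.
Euler's identity itself follows from the functional equation `E(w) = (1 + w) E(qw)` of its
right-hand side `E(w)`: iterating gives `E(w) = (-w;q)_m E(qᵐw)`, and `E(qᵐw) → E(0) = 1`.
-/

open Filter Finset Topology

lemma qp_succ (a q : ℂ) (k : ℕ) : qp a q (k + 1) = qp a q k * (1 - a * q ^ k) :=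
  prod_range_succ _ _

lemma one_sub_pow_ne_zero {q : ℂ} (hq : ‖q‖ < 1) {n : ℕ} (hn : n ≠ 0) : 1 - q ^ n ≠ 0 := by
  refine sub_ne_zero.2 fun h => ?_
  have := congrArg norm h
  rw [norm_one, norm_pow] at this
  exact (pow_lt_one₀ (norm_nonneg q) hq hn).ne' this

lemma qp_self_ne_zero {q : ℂ} (hq : ‖q‖ < 1) (n : ℕ) : qp q q n ≠ 0 :=
  prod_ne_zero_iff.2 fun j _ => by
    rw [← pow_succ']
    exact one_sub_pow_ne_zero hq j.succ_ne_zero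

lemma multipliable_one_sub_mul_pow (a : ℂ) {q : ℂ} (hq : ‖q‖ < 1) :
    Multipliable fun j : ℕ => 1 - a * q ^ j := by
  simp_rw [sub_eq_add_neg]
  refine multipliable_one_add_of_summable ?_
  simpa [norm_mul, norm_pow] using
    (summable_geometric_of_lt_one (norm_nonneg q) hq).mul_left ‖a‖

lemma tendsto_qp_qpi (a : ℂ) {q : ℂ} (hq : ‖q‖ < 1) :
    Tendsto (qp a q) atTop (𝓝 (qpi a q)) :=
  (multipliable_one_sub_mul_pow a hq).hasProd.tendsto_prod_nat

lemma qpi_eq_qp_mul_qpi (a : ℂ) {q : ℂ} (hq : ‖q‖ < 1) (m : ℕ) :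
    qpi a q = qp a q m * qpi (a * q ^ m) q := by
  have hshift : (fun j => 1 - a * q ^ (j + m)) = fun j => 1 - a * q ^ m * q ^ j := by
    ext j; ring
  have h : Multipliable fun j => 1 - a * q ^ (j + m) := by
    rw [hshift]; exact multipliable_one_sub_mul_pow (a * q ^ m) hq
  rw [qpi, ← h.prod_mul_tprod_nat_mul' (f := fun j => 1 - a * q ^ j), hshift, qp, qpi]

noncomputable def eulerCoeff (q : ℂ) (n : ℕ) : ℂ := q ^ (n * (n - 1) / 2) / qp q q n

noncomputable def eulerSum (q w : ℂ) : ℂ := ∑' n, eulerCoeff q n * w ^ n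

lemma eulerCoeff_zero (q : ℂ) : eulerCoeff q 0 = 1 := by simp [eulerCoeff, qp]

lemma succ_mul_div_two (n : ℕ) : (n + 1) * n / 2 = n * (n - 1) / 2 + n := by
  cases n with
  | zero => rfl
  | succ m => rw [Nat.add_sub_cancel, ← Nat.add_mul_div_left _ _ two_pos]; congr 1; ring

lemma eulerCoeff_succ (q : ℂ) (n : ℕ) :
    eulerCoeff q (n + 1) = eulerCoeff q n * q ^ n / (1 - q ^ (n + 1)) := by
  rw [eulerCoeff, eulerCoeff, qp_succ, Nat.add_sub_cancel, succ_mul_div_two, pow_add, ← pow_succ',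
    div_mul_eq_mul_div, div_div]

lemma eulerCoeff_sq (q : ℂ) (n : ℕ) :
    eulerCoeff (q ^ 2) n = q ^ (n * (n - 1)) / qp (q ^ 2) (q ^ 2) n := by
  rw [eulerCoeff, ← pow_mul, Nat.mul_div_cancel' (Nat.even_mul_pred_self n).two_dvd]

lemma one_sub_norm_le_norm_one_sub_pow_succ {q : ℂ} (hq : ‖q‖ < 1) (n : ℕ) :
    1 - ‖q‖ ≤ ‖1 - q ^ (n + 1)‖ :=
  calc 1 - ‖q‖ ≤ 1 - ‖q‖ ^ (n + 1) := by
        gcongr; exact pow_le_of_le_one (norm_nonneg q) hq.le n.succ_ne_zero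
    _ = ‖(1 : ℂ)‖ - ‖q ^ (n + 1)‖ := by rw [norm_one, norm_pow]
    _ ≤ ‖1 - q ^ (n + 1)‖ := norm_sub_norm_le _ _

lemma summable_norm_eulerCoeff_mul_pow {q : ℂ} (hq : ‖q‖ < 1) (w : ℂ) :
    Summable fun n => ‖eulerCoeff q n * w ^ n‖ := by
  have hratio : Tendsto (fun n => ‖w‖ / (1 - ‖q‖) * ‖q‖ ^ n) atTop (𝓝 0) := by
    simpa using (tendsto_pow_atTop_nhds_zero_of_lt_one (norm_nonneg q) hq).const_mul
      (‖w‖ / (1 - ‖q‖))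
  refine summable_of_ratio_norm_eventually_le one_half_lt_one ?_
  filter_upwards [hratio.eventually_le_const one_half_pos] with n hn
  rw [norm_norm, norm_norm, eulerCoeff_succ, pow_succ]
  calc ‖eulerCoeff q n * q ^ n / (1 - q ^ (n + 1)) * (w ^ n * w)‖
      = ‖eulerCoeff q n * w ^ n‖ * (‖q‖ ^ n * ‖w‖ / ‖1 - q ^ (n + 1)‖) := by
        rw [norm_mul, norm_div, norm_mul, norm_mul, norm_mul, norm_pow]; ring
    _ ≤ ‖eulerCoeff q n * w ^ n‖ * (‖w‖ / (1 - ‖q‖) * ‖q‖ ^ n) := by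
        rw [div_mul_eq_mul_div, mul_comm (‖q‖ ^ n)]
        gcongr
        exact one_sub_norm_le_norm_one_sub_pow_succ hq n
    _ ≤ 1 / 2 * ‖eulerCoeff q n * w ^ n‖ := by
        rw [mul_comm]; gcongr

lemma eulerSum_eq_one_add_mul {q : ℂ} (hq : ‖q‖ < 1) (w : ℂ) :
    eulerSum q w = (1 + w) * eulerSum q (q * w) := by
  have hs := (summable_norm_eulerCoeff_mul_pow hq w).of_norm
  have hs' := (summable_norm_eulerCoeff_mul_pow hq (q * w)).of_norm
  have hterm (n : ℕ) : eulerCoeff q (n + 1) * w ^ (n + 1) - eulerCoeff q (n + 1) * (q * w) ^ (n + 1)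
      = w * (eulerCoeff q n * (q * w) ^ n) := by
    rw [eulerCoeff_succ, mul_pow, mul_pow]
    field_simp [one_sub_pow_ne_zero hq n.succ_ne_zero]
    ring
  have hdiff : eulerSum q w - eulerSum q (q * w) = w * eulerSum q (q * w) := by
    rw [eulerSum, eulerSum, ← hs.tsum_sub hs', (hs.sub hs').tsum_eq_zero_add, ← tsum_mul_left]
    simp only [hterm, pow_zero, sub_self, zero_add]
  linear_combination hdiff

lemma eulerSum_eq_qp_mul {q : ℂ} (hq : ‖q‖ < 1) (w : ℂ) (m : ℕ) :
    eulerSum q w = qp (-w) q m * eulerSum q (q ^ m * w) := by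
  induction m with
  | zero => simp [qp]
  | succ m ih =>
    rw [ih, eulerSum_eq_one_add_mul hq (q ^ m * w), qp_succ, pow_succ']
    ring_nf

lemma eulerSum_zero (q : ℂ) : eulerSum q 0 = 1 := by
  rw [eulerSum, tsum_eq_single 0 fun n hn => by simp [hn], pow_zero, mul_one, eulerCoeff_zero]

lemma continuousOn_eulerSum {q : ℂ} (hq : ‖q‖ < 1) (w : ℂ) :
    ContinuousOn (eulerSum q) (Metric.closedBall 0 ‖w‖) :=
  continuousOn_tsum (fun n => (continuous_const.mul (continuous_pow n)).continuousOn)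
    (summable_norm_eulerCoeff_mul_pow hq w) fun n z hz => by
      rw [norm_mul, norm_mul, norm_pow, norm_pow]
      gcongr
      simpa using hz

lemma tendsto_eulerSum_pow_mul {q : ℂ} (hq : ‖q‖ < 1) (w : ℂ) :
    Tendsto (fun m : ℕ => eulerSum q (q ^ m * w)) atTop (𝓝 1) := by
  have hlim : Tendsto (fun m : ℕ => q ^ m * w) atTop (𝓝[Metric.closedBall 0 ‖w‖] 0) := by
    refine tendsto_nhdsWithin_iff.2 ⟨?_, Eventually.of_forall fun m => ?_⟩
    · simpa using (tendsto_pow_atTop_nhds_zero_of_norm_lt_one hq).mul_const w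
    · rw [mem_closedBall_zero_iff, norm_mul, norm_pow]
      exact mul_le_of_le_one_left (norm_nonneg w) (pow_le_one₀ (norm_nonneg q) hq.le)
  simpa only [eulerSum_zero, Function.comp_def] using
    ((continuousOn_eulerSum hq w) 0 (Metric.mem_closedBall_self (norm_nonneg w))).tendsto.comp hlim

theorem qpi_neg_eq_eulerSum {q : ℂ} (hq : ‖q‖ < 1) (w : ℂ) : qpi (-w) q = eulerSum q w := by
  have h := (tendsto_qp_qpi (-w) hq).mul (tendsto_eulerSum_pow_mul hq w)
  simp_rw [← eulerSum_eq_qp_mul hq, mul_one] at h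
  exact tendsto_nhds_unique h tendsto_const_nhds

lemma summable_eulerCoeff_mul_eulerCoeff_mul_pow {p q r : ℂ} (hp : ‖p‖ < 1) (hq : ‖q‖ < 1)
    (hr : ‖r‖ ≤ 1) (x y : ℂ) :
    Summable (Function.uncurry fun k n : ℕ =>
      eulerCoeff p k * y ^ k * (eulerCoeff q n * x ^ n) * r ^ (k * n)) := by
  refine .of_norm_bounded ((summable_norm_eulerCoeff_mul_pow hp y).mul_of_nonneg
    (summable_norm_eulerCoeff_mul_pow hq x) (fun _ => norm_nonneg _) fun _ => norm_nonneg _)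
    fun kn => ?_
  rw [Function.uncurry_apply_pair, norm_mul _ (r ^ _), norm_mul (_ * _), norm_pow]
  exact mul_le_of_le_one_right (by positivity) (pow_le_one₀ (norm_nonneg r) hr)

theorem tsum_eulerCoeff_mul_qpi_comm {p q r : ℂ} (hp : ‖p‖ < 1) (hq : ‖q‖ < 1) (hr : ‖r‖ ≤ 1)
    (x y : ℂ) :
    ∑' k, eulerCoeff p k * y ^ k * qpi (-(x * r ^ k)) q =
      ∑' n, eulerCoeff q n * x ^ n * qpi (-(y * r ^ n)) p := by
  have hrow (k : ℕ) : eulerCoeff p k * y ^ k * qpi (-(x * r ^ k)) q =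
      ∑' n, eulerCoeff p k * y ^ k * (eulerCoeff q n * x ^ n) * r ^ (k * n) := by
    rw [qpi_neg_eq_eulerSum hq, eulerSum, ← tsum_mul_left]
    congr 1; ext n; rw [mul_pow, ← pow_mul]; ring
  have hcol (n : ℕ) : eulerCoeff q n * x ^ n * qpi (-(y * r ^ n)) p =
      ∑' k, eulerCoeff p k * y ^ k * (eulerCoeff q n * x ^ n) * r ^ (k * n) := by
    rw [qpi_neg_eq_eulerSum hp, eulerSum, ← tsum_mul_left]
    congr 1; ext k; rw [mul_pow, ← pow_mul, mul_comm n k]; ring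
  simp_rw [hrow, hcol]
  exact (summable_eulerCoeff_mul_eulerCoeff_mul_pow hp hq hr x y).tsum_comm.symm

theorem quadratic_transform (q x y : ℂ) (hq : ‖q‖ < 1)
    (h1 : ∀ k, qp (-x) q k ≠ 0) (h2 : ∀ k, qp (-y) (q ^ 2) k ≠ 0) :
    qpi (-x) q * ∑' k : ℕ, q ^ (k * (k - 1)) * y ^ k / (qp (q ^ 2) (q ^ 2) k * qp (-x) q (2 * k)) =
      qpi (-y) (q ^ 2) *
        ∑' k : ℕ, q ^ (k * (k - 1) / 2) * x ^ k / (qp q q k * qp (-y) (q ^ 2) k) := by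
  have hq2 : ‖q ^ 2‖ < 1 := by rw [norm_pow]; exact pow_lt_one₀ (norm_nonneg q) hq two_ne_zero
  have hL (k : ℕ) : qpi (-x) q * (q ^ (k * (k - 1)) * y ^ k /
      (qp (q ^ 2) (q ^ 2) k * qp (-x) q (2 * k))) =
      eulerCoeff (q ^ 2) k * y ^ k * qpi (-(x * (q ^ 2) ^ k)) q := by
    rw [qpi_eq_qp_mul_qpi (-x) hq (2 * k), eulerCoeff_sq, ← pow_mul, neg_mul]
    field_simp [h1 (2 * k), qp_self_ne_zero hq2 k]
  have hR (n : ℕ) : qpi (-y) (q ^ 2) * (q ^ (n * (n - 1) / 2) * x ^ n /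
      (qp q q n * qp (-y) (q ^ 2) n)) =
      eulerCoeff q n * x ^ n * qpi (-(y * (q ^ 2) ^ n)) (q ^ 2) := by
    rw [qpi_eq_qp_mul_qpi (-y) hq2 n, eulerCoeff, neg_mul]
    field_simp [h2 n, qp_self_ne_zero hq n]
  rw [← tsum_mul_left, ← tsum_mul_left]
  simp_rw [hL, hR]
  exact tsum_eulerCoeff_mul_qpi_comm hq2 hq hq2.le x y
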